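/- For u ∈ A_{2n}(4312), define h(u) = min{2n+1, u_j : ∃ i < j with u_i < u_j} and g(u) = min{2n+1, u_i : ∃ i < j < k with u_j < u_k < u_i}. Then g(u) ≠ u_1 if and only if h(u) = u_1 + 1. -/

import Mathlib

/-- `u` is a permutation of `{1,...,m}`, given as the word `u 0, u 1, ..., u (m-1)`. -/
def IsPermOn (m : ℕ) (u : Fin m → ℕ) : Prop :=
  Function.Injective u ∧ ∀ i, u i ∈ Finset.Icc 1 m

/-- up-down (alternating): u 0 < u 1 > u 2 < u 3 > ... -/
def UpDown (m : ℕ) (u : Fin m → ℕ) : Prop :=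
  ∀ i : ℕ, ∀ h : i + 1 < m,
    (i % 2 = 0 → u ⟨i, by omega⟩ < u ⟨i + 1, h⟩) ∧
    (i % 2 = 1 → u ⟨i + 1, h⟩ < u ⟨i, by omega⟩)

/-- down-up: u 0 > u 1 < u 2 > u 3 < ... -/
def DownUp (m : ℕ) (u : Fin m → ℕ) : Prop :=
  ∀ i : ℕ, ∀ h : i + 1 < m,
    (i % 2 = 0 → u ⟨i + 1, h⟩ < u ⟨i, by omega⟩) ∧
    (i % 2 = 1 → u ⟨i, by omega⟩ < u ⟨i + 1, h⟩)

/-- `u` contains the pattern `σ`. -/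
def Contains {m k : ℕ} (u : Fin m → ℕ) (σ : Fin k → ℕ) : Prop :=
  ∃ g : Fin k → Fin m, StrictMono g ∧ ∀ a b : Fin k, u (g a) < u (g b) ↔ σ a < σ b

def Avoids {m k : ℕ} (u : Fin m → ℕ) (σ : Fin k → ℕ) : Prop := ¬ Contains u σ

/-- The set `A_m(σ)` of σ-avoiding up-down alternating permutations of `{1,...,m}`. -/
def AvoidSet (m : ℕ) {k : ℕ} (σ : Fin k → ℕ) : Set (Fin m → ℕ) :=
  {u | IsPermOn m u ∧ UpDown m u ∧ Avoids u σ}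

def p1234 : Fin 4 → ℕ := ![1, 2, 3, 4]
def p1243 : Fin 4 → ℕ := ![1, 2, 4, 3]
def p2143 : Fin 4 → ℕ := ![2, 1, 4, 3]
def p4312 : Fin 4 → ℕ := ![4, 3, 1, 2]
def p3412 : Fin 4 → ℕ := ![3, 4, 1, 2]

/-- `f(u)`: max over 0 and the smaller entries of 21-patterns of `u`. -/
noncomputable def fval {m : ℕ} (u : Fin m → ℕ) : ℕ :=
  sSup ({0} ∪ {x | ∃ i j : Fin m, i < j ∧ u j < u i ∧ x = u j})

/-- `e(u)`: max over 0 and the smallest entries of 132-patterns of `u`. -/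
noncomputable def eval' {m : ℕ} (u : Fin m → ℕ) : ℕ :=
  sSup ({0} ∪ {x | ∃ i j k : Fin m, i < j ∧ j < k ∧ u i < u k ∧ u k < u j ∧ x = u i})

/-- `g(u)`: min over m+1 and the largest entries of 312-patterns of `u`. -/
noncomputable def gval {m : ℕ} (u : Fin m → ℕ) : ℕ :=
  sInf ({m + 1} ∪ {x | ∃ i j k : Fin m, i < j ∧ j < k ∧ u j < u k ∧ u k < u i ∧ x = u i})

/-- `h(u)`: min over m+1 and the larger entries of 12-patterns of `u`. -/
noncomputable def hval {m : ℕ} (u : Fin m → ℕ) : ℕ :=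
  sInf ({m + 1} ∪ {x | ∃ i j : Fin m, i < j ∧ u i < u j ∧ x = u j})

/-- the operation `v ↦ u`: prepend `v`, increasing every entry `≥ v` by 1. -/
def ins {m : ℕ} (v : ℕ) (u : Fin m → ℕ) : Fin (m + 1) → ℕ :=
  Fin.cases v (fun j => if u j < v then u j else u j + 1)

/-- standardization of a word with distinct entries. -/
def stWord {k : ℕ} (r : Fin k → ℕ) : Fin k → ℕ :=
  fun j => (Finset.univ.filter (fun i => r i ≤ r j)).card

/-!
Write `a = u₁`. Since `a < u₂ ≤ 2n`, the value `a + 1` occurs to the right of `u₁`, so `h(u) ≤ a + 1`.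
It remains to see that `g(u) = a` exactly when `h(u) ≤ a`. A 312-pattern with top `a` contains a
12-pattern below `a`. Conversely, a 12-pattern `u_i < u_j < a` together with `u₁` is a 312-pattern
with top `a`, and no 312-pattern has a top smaller than `a`: prefixing `u₁` would give a 4312-pattern.
-/

section Patterns

variable {m : ℕ} {u : Fin m → ℕ}

theorem contains_p4312 {a b c d : Fin m} (hab : a < b) (hbc : b < c) (hcd : c < d)
    (hcd' : u c < u d) (hdb : u d < u b) (hba : u b < u a) : Contains u p4312 := by
  refine ⟨![a, b, c, d], Fin.strictMono_iff_lt_succ.2 fun i => ?_, fun x y => ?_⟩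
  · fin_cases i <;> assumption
  · fin_cases x <;> fin_cases y <;> simp [p4312] <;> omega

theorem hval_le {i j : Fin m} (hij : i < j) (hu : u i < u j) : hval u ≤ u j :=
  Nat.sInf_le (Or.inr ⟨i, j, hij, hu, rfl⟩)

theorem gval_le {i j k : Fin m} (hij : i < j) (hjk : j < k) (hjk' : u j < u k)
    (hki : u k < u i) : gval u ≤ u i :=
  Nat.sInf_le (Or.inr ⟨i, j, k, hij, hjk, hjk', hki, rfl⟩)

theorem exists_of_hval_le (h : hval u ≤ m) : ∃ i j, i < j ∧ u i < u j ∧ u j = hval u := by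
  rcases Nat.sInf_mem (⟨m + 1, Or.inl rfl⟩ : ({m + 1} ∪ {x | ∃ i j : Fin m, i < j ∧ u i < u j ∧
      x = u j} : Set ℕ).Nonempty) with h' | ⟨i, j, hij, hu, hx⟩
  · have : hval u = m + 1 := h'
    omega
  · exact ⟨i, j, hij, hu, hx.symm⟩

theorem exists_of_gval_le (h : gval u ≤ m) :
    ∃ i j k, i < j ∧ j < k ∧ u j < u k ∧ u k < u i ∧ u i = gval u := by
  rcases Nat.sInf_mem (⟨m + 1, Or.inl rfl⟩ : ({m + 1} ∪ {x | ∃ i j k : Fin m, i < j ∧ j < k ∧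
      u j < u k ∧ u k < u i ∧ x = u i} : Set ℕ).Nonempty) with h' | ⟨i, j, k, hij, hjk, hjk', hki, hx⟩
  · have : gval u = m + 1 := h'
    omega
  · exact ⟨i, j, k, hij, hjk, hjk', hki, hx.symm⟩

theorem IsPermOn.exists_apply_eq (hu : IsPermOn m u) {x : ℕ} (hx : x ∈ Finset.Icc 1 m) :
    ∃ p, u p = x := by
  obtain ⟨p, -, hp⟩ := Finset.surj_on_of_inj_on_of_card_le (s := Finset.univ)
    (fun p _ => u p) (fun p _ => hu.2 p) (fun p q _ _ h => hu.1 h) (by simp) x hx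
  exact ⟨p, hp.symm⟩

variable (hm : 0 < m)

theorem head_lt_of_apply_ne {i : Fin m} (hi : u i ≠ u ⟨0, hm⟩) : ⟨0, hm⟩ < i :=
  Fin.lt_def.2 (Nat.pos_of_ne_zero fun h => hi (congrArg u (Fin.ext h)))

theorem IsPermOn.hval_le_head_succ (hu : IsPermOn m u) (h : u ⟨0, hm⟩ < m) :
    hval u ≤ u ⟨0, hm⟩ + 1 := by
  obtain ⟨p, hp⟩ := hu.exists_apply_eq (x := u ⟨0, hm⟩ + 1)
    (Finset.mem_Icc.2 ⟨by omega, h⟩)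
  have h0p : ⟨0, hm⟩ < p := head_lt_of_apply_ne hm (u := u) (by omega)
  exact hp ▸ hval_le h0p (by omega)

theorem hval_le_head_of_gval_eq (h : gval u = u ⟨0, hm⟩) (hle : u ⟨0, hm⟩ ≤ m) :
    hval u ≤ u ⟨0, hm⟩ := by
  obtain ⟨i, j, k, -, hjk, hjk', hki, hi⟩ := exists_of_gval_le (u := u) (by omega)
  have := hval_le hjk hjk'
  omega

theorem IsPermOn.gval_le_head_of_hval_le (hu : IsPermOn m u) (h : hval u ≤ u ⟨0, hm⟩) :
    gval u ≤ u ⟨0, hm⟩ := by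
  obtain ⟨i, j, hij, hij', hj⟩ :=
    exists_of_hval_le (u := u) (h.trans (Finset.mem_Icc.1 (hu.2 _)).2)
  have hj0 : u j ≠ u ⟨0, hm⟩ := fun he => by
    obtain rfl := hu.1 he
    exact Nat.not_lt_zero _ (Fin.lt_def.1 hij)
  exact gval_le (head_lt_of_apply_ne hm (u := u) (by omega)) hij hij' (by omega)

theorem head_le_gval (hav : Avoids u p4312) (hle : u ⟨0, hm⟩ ≤ m) : u ⟨0, hm⟩ ≤ gval u := by
  by_contra! h
  obtain ⟨i, j, k, hij, hjk, hjk', hki, hi⟩ := exists_of_gval_le (u := u) (by omega)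
  have h0i : ⟨0, hm⟩ < i := head_lt_of_apply_ne hm (u := u) (by omega)
  exact hav (contains_p4312 h0i hij hjk hjk' hki (by omega))

theorem IsPermOn.gval_eq_head_iff (hu : IsPermOn m u) (hav : Avoids u p4312) :
    gval u = u ⟨0, hm⟩ ↔ hval u ≤ u ⟨0, hm⟩ := by
  have hle := (Finset.mem_Icc.1 (hu.2 ⟨0, hm⟩)).2
  exact ⟨fun h => hval_le_head_of_gval_eq hm h hle,
    fun h => (hu.gval_le_head_of_hval_le hm h).antisymm (head_le_gval hm hav hle)⟩

end Patterns

theorem stmt14 (n : ℕ) (hn : 1 ≤ n) (u : Fin (2 * n) → ℕ) (hu : u ∈ AvoidSet (2 * n) p4312) :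
    gval u ≠ u ⟨0, by omega⟩ ↔ hval u = u ⟨0, by omega⟩ + 1 := by
  obtain ⟨hperm, hud, hav⟩ := hu
  have hm : 0 < 2 * n := by omega
  have hhead : u ⟨0, hm⟩ < 2 * n :=
    ((hud 0 (by omega)).1 rfl).trans_le (Finset.mem_Icc.1 (hperm.2 _)).2
  have := hperm.hval_le_head_succ hm hhead
  rw [Ne, hperm.gval_eq_head_iff hm hav]
  omega
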